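/- Let N > 0, U = (N/(16(1+δ)))^{1/3} and V = U^{5/6} with δ = 10^{-4}. Then the number of integer 5-tuples-type sum J(n) = Σ_{m₁+m₂+m₃+m₄+m₅=n, U³<m₂,m₃≤8U³, V³<m₄,m₅≤8V³, m₁≥1} (m₂m₃m₄m₅)^{-2/3} satisfies J(n) ≫ U²V = N^{11/9}·(16(1+δ))^{-11/27} up to absolute constants, for every integer n with (1-η)N ≤ n ≤ N and η sufficiently small. -/

import Mathlib

/-!
Restrict `m₂, m₃` to `(U³, 2U³]` and `m₄, m₅` to `(V³, 2V³]`. For `V ≤ U` these tuples have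
`m₂ + ⋯ + m₅ ≤ 8U³ < n` as soon as `n ≥ N / 2`, so all of them are counted by `J`. The sum over this
box factors into four one-dimensional sums, and `∑_{u³ < k ≤ 2u³} k^{-2/3} ≥ (u³/2)(2u³)^{-2/3} ≥ u/4`.
Hence `J ≥ U²V²/256 ≥ U²V/256`.
-/

open Finset
open scoped Classical

/-- The weighted count
`J(n) = ∑_{m₁+⋯+m₅ = n, U³ < m₂,m₃ ≤ 8U³, V³ < m₄,m₅ ≤ 8V³, m₁ ≥ 1} (m₂m₃m₄m₅)^{-2/3}`,
parametrized by the 4-tuple `(m₂,m₃,m₄,m₅)` (then `m₁ = n - m₂ - m₃ - m₄ - m₅ ≥ 1`). -/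
noncomputable def J (U V : ℝ) (n : ℕ) : ℝ :=
  ∑ m ∈ (Fintype.piFinset fun _ : Fin 4 => Finset.range (n + 1)).filter
      (fun m =>
        (U ^ 3 < (m 0 : ℝ) ∧ (m 0 : ℝ) ≤ 8 * U ^ 3) ∧
        (U ^ 3 < (m 1 : ℝ) ∧ (m 1 : ℝ) ≤ 8 * U ^ 3) ∧
        (V ^ 3 < (m 2 : ℝ) ∧ (m 2 : ℝ) ≤ 8 * V ^ 3) ∧
        (V ^ 3 < (m 3 : ℝ) ∧ (m 3 : ℝ) ≤ 8 * V ^ 3) ∧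
        m 0 + m 1 + m 2 + m 3 < n),
    ((m 0 * m 1 * m 2 * m 3 : ℕ) : ℝ) ^ (-(2/3) : ℝ)

noncomputable def dyadicBlock (a : ℝ) : Finset ℕ := Ioc ⌊a⌋₊ ⌊2 * a⌋₊

lemma mem_dyadicBlock {a : ℝ} (ha : 0 ≤ a) {m : ℕ} :
    m ∈ dyadicBlock a ↔ a < m ∧ (m : ℝ) ≤ 2 * a := by
  rw [dyadicBlock, mem_Ioc, Nat.floor_lt ha, Nat.le_floor_iff (by positivity)]

lemma half_le_card_dyadicBlock {a : ℝ} (ha : 1 ≤ a) : a / 2 ≤ #(dyadicBlock a) := by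
  have hfloor : 2 * ⌊a⌋₊ ≤ ⌊2 * a⌋₊ :=
    Nat.le_floor (by push_cast; gcongr; exact Nat.floor_le (by linarith))
  have hfloor' : (2 * ⌊a⌋₊ : ℝ) ≤ ⌊2 * a⌋₊ := by exact_mod_cast hfloor
  have hone : (1 : ℝ) ≤ ⌊a⌋₊ := by exact_mod_cast (Nat.one_le_floor_iff a).2 ha
  have hlt := Nat.sub_one_lt_floor a
  rw [dyadicBlock, Nat.card_Ioc, Nat.cast_sub (by omega)]
  linarith

lemma quarter_le_sum_dyadicBlock_rpow {u : ℝ} (hu : 1 ≤ u) :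
    u / 4 ≤ ∑ k ∈ dyadicBlock (u ^ 3), (k : ℝ) ^ (-(2 / 3) : ℝ) := by
  have hu3 : 1 ≤ u ^ 3 := one_le_pow₀ hu
  have hweight : (2 * u ^ 3) ^ (-(2 / 3) : ℝ) = 2 ^ (-(2 / 3) : ℝ) * (u ^ 2)⁻¹ := by
    rw [Real.mul_rpow (by norm_num) (by positivity), ← Real.rpow_natCast u 3,
      ← Real.rpow_mul (by linarith)]
    norm_num
  have htwo : (2 : ℝ)⁻¹ ≤ 2 ^ (-(2 / 3) : ℝ) := by
    simpa [Real.rpow_neg_one] using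
      Real.rpow_le_rpow_of_exponent_le (by norm_num : (1 : ℝ) ≤ 2) (by norm_num : (-1 : ℝ) ≤ -(2 / 3))
  calc u / 4 = u ^ 3 / 2 * (2⁻¹ * (u ^ 2)⁻¹) := by field_simp; ring
    _ ≤ #(dyadicBlock (u ^ 3)) * (2 * u ^ 3) ^ (-(2 / 3) : ℝ) := by
        rw [hweight]; gcongr; exact half_le_card_dyadicBlock hu3
    _ ≤ _ := by
        rw [← nsmul_eq_mul]
        refine card_nsmul_le_sum _ _ _ fun k hk => ?_
        obtain ⟨hlo, hhi⟩ := (mem_dyadicBlock (by linarith)).1 hk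
        exact Real.rpow_le_rpow_of_nonpos (by linarith) hhi (by norm_num)

lemma sum_piFinset_dyadicBlock_le_J {U V : ℝ} {n : ℕ} (hU : 0 ≤ U) (hV : 0 ≤ V)
    (hn : 4 * U ^ 3 + 4 * V ^ 3 < n) :
    ∑ m ∈ Fintype.piFinset
        ![dyadicBlock (U ^ 3), dyadicBlock (U ^ 3), dyadicBlock (V ^ 3), dyadicBlock (V ^ 3)],
      ((m 0 * m 1 * m 2 * m 3 : ℕ) : ℝ) ^ (-(2 / 3) : ℝ) ≤ J U V n := by
  refine sum_le_sum_of_subset_of_nonneg (fun m hm => ?_) fun _ _ _ => by positivity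
  rw [Fintype.mem_piFinset] at hm
  have hU3 : 0 ≤ U ^ 3 := by positivity
  have hV3 : 0 ≤ V ^ 3 := by positivity
  obtain ⟨h0, h0'⟩ := (mem_dyadicBlock hU3).1 (hm 0)
  obtain ⟨h1, h1'⟩ := (mem_dyadicBlock hU3).1 (hm 1)
  obtain ⟨h2, h2'⟩ := (mem_dyadicBlock hV3).1 (hm 2)
  obtain ⟨h3, h3'⟩ := (mem_dyadicBlock hV3).1 (hm 3)
  have hsum : m 0 + m 1 + m 2 + m 3 < n := by
    have : ((m 0 + m 1 + m 2 + m 3 : ℕ) : ℝ) < n := by push_cast; linarith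
    exact_mod_cast this
  simp only [mem_filter, Fintype.mem_piFinset, mem_range]
  refine ⟨fun i => by fin_cases i <;> dsimp <;> omega, ⟨h0, by linarith⟩, ⟨h1, by linarith⟩,
    ⟨h2, by linarith⟩, ⟨h3, by linarith⟩, hsum⟩

lemma div_256_le_J {U V : ℝ} {n : ℕ} (hU : 1 ≤ U) (hV : 1 ≤ V) (hn : 4 * U ^ 3 + 4 * V ^ 3 < n) :
    U ^ 2 * V ^ 2 / 256 ≤ J U V n := by
  have hprod : ∀ m : Fin 4 → ℕ,
      ∏ i, (m i : ℝ) ^ (-(2 / 3) : ℝ) = ((m 0 * m 1 * m 2 * m 3 : ℕ) : ℝ) ^ (-(2 / 3) : ℝ) := by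
    intro m
    rw [Real.finsetProd_rpow _ _ fun i _ => by positivity, Fin.prod_univ_four]
    push_cast; rfl
  have hU' := quarter_le_sum_dyadicBlock_rpow hU
  have hV' := quarter_le_sum_dyadicBlock_rpow hV
  calc U ^ 2 * V ^ 2 / 256 = U / 4 * (U / 4) * (V / 4) * (V / 4) := by ring
    _ ≤ ∏ i, ∑ k ∈ ![dyadicBlock (U ^ 3), dyadicBlock (U ^ 3), dyadicBlock (V ^ 3),
          dyadicBlock (V ^ 3)] i, (k : ℝ) ^ (-(2 / 3) : ℝ) := by
        rw [Fin.prod_univ_four]; gcongr <;> assumption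
    _ = _ := by rw [prod_univ_sum]; simp only [hprod]
    _ ≤ J U V n := sum_piFinset_dyadicBlock_le_J (by linarith) (by linarith) hn

theorem singular_integral_lower_bound :
    ∃ c : ℝ, 0 < c ∧ ∃ η₀ : ℝ, 0 < η₀ ∧ η₀ < 1 ∧
      ∀ η : ℝ, 0 < η → η ≤ η₀ → ∃ N₀ : ℝ, ∀ N : ℝ, N₀ ≤ N →
        ∀ n : ℕ, (1 - η) * N ≤ (n : ℝ) → (n : ℝ) ≤ N →
          c * ((N / (16 * (1 + 10 ^ (-4 : ℤ)))) ^ ((1 : ℝ)/3)) ^ 2 *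
              ((N / (16 * (1 + 10 ^ (-4 : ℤ)))) ^ ((1 : ℝ)/3)) ^ ((5 : ℝ)/6)
            ≤ J ((N / (16 * (1 + 10 ^ (-4 : ℤ)))) ^ ((1 : ℝ)/3))
                (((N / (16 * (1 + 10 ^ (-4 : ℤ)))) ^ ((1 : ℝ)/3)) ^ ((5 : ℝ)/6)) n := by
  refine ⟨1 / 256, by norm_num, 1 / 2, by norm_num, by norm_num,
    fun η _ hη => ⟨32, fun N hN n hn _ => ?_⟩⟩
  set X := N / (16 * (1 + 10 ^ (-4 : ℤ))) with hX
  set U := X ^ ((1 : ℝ) / 3) with hU_def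
  set V := U ^ ((5 : ℝ) / 6)
  have hN : N = 16 * (1 + 10 ^ (-4 : ℤ)) * X := by rw [hX]; field_simp
  have hX1 : 1 ≤ X := by rw [hX, le_div_iff₀ (by norm_num)]; norm_num; linarith
  have hU3 : U ^ 3 = X := by
    rw [hU_def, one_div, ← Nat.cast_ofNat, Real.rpow_inv_natCast_pow (by linarith) (by norm_num)]
  have hU : 1 ≤ U := Real.one_le_rpow hX1 (by norm_num)
  have hV : 1 ≤ V := Real.one_le_rpow hU (by norm_num)
  have hVU : V ≤ U := by
    simpa using Real.rpow_le_rpow_of_exponent_le hU (by norm_num : (5 : ℝ) / 6 ≤ 1)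
  have hn8 : 8 * X < n := by
    have : (1 / 2 : ℝ) * N ≤ n := le_trans (by gcongr; linarith) hn
    rw [hN] at this; norm_num at this; linarith
  have hV3 : V ^ 3 ≤ U ^ 3 := by gcongr
  calc 1 / 256 * U ^ 2 * V = U ^ 2 * V * 1 / 256 := by ring
    _ ≤ U ^ 2 * V * V / 256 := by gcongr
    _ = U ^ 2 * V ^ 2 / 256 := by ring
    _ ≤ J U V n := div_256_le_J hU hV (by linarith)
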